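/- Let S be a generic subspace of H (i.e., P_S e_j ≠ 0 for all j) and let v^j = P_S e_j / ‖P_S e_j‖ be its principal standard vectors. Then for every w ∈ S with ‖w‖ = 1 and every j: (i) w_j = ‖P_S e_j‖·⟨w, v^j⟩ and |w_j| ≤ v^j_j, where v^j_j = ‖P_S e_j‖ > 0; (ii) |w_j| = v^j_j if and only if w = e^{i·arg(w_j)}·v^j; (iii) {v^j, v^k} is linearly dependent if and only if v^j_j = |v^k_j|, which is also equivalent to v^k_k = |v^j_k|. -/

import Mathlib

open scoped InnerProductSpace
open ContinuousLinearMap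

noncomputable section

variable {H : Type*} [NormedAddCommGroup H] [InnerProductSpace ℂ H] [CompleteSpace H]

/-- The orthogonal projection onto `S`, as an operator `H →L[ℂ] H`. -/
def projOp (S : Submodule ℂ H) [S.HasOrthogonalProjection] : H →L[ℂ] H :=
  S.subtypeL ∘L S.orthogonalProjectionOnto

/-- The diagonal of `T` with respect to the fixed orthonormal basis `e`. -/
def diagSeq (e : HilbertBasis ℕ ℂ H) (T : H →L[ℂ] H) : ℕ → ℝ :=
  fun i => (⟪T (e i), e i⟫_ℂ).re

/-- The (diagonal) trace of `T` with respect to the fixed orthonormal basis `e`. -/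
def diagTr (e : HilbertBasis ℕ ℂ H) (T : H →L[ℂ] H) : ℝ :=
  ∑' i, (⟪T (e i), e i⟫_ℂ).re

/-- `ρ` is a density operator: a positive trace-class operator with trace one.
(For positive operators, being trace class is equivalent to being compact with
summable diagonal in an orthonormal basis.) -/
def IsDensity (e : HilbertBasis ℕ ℂ H) (ρ : H →L[ℂ] H) : Prop :=
  IsCompactOperator ρ ∧ ρ.IsPositive ∧
    Summable (fun i => (⟪ρ (e i), e i⟫_ℂ).re) ∧ diagTr e ρ = 1

/-- `D_S`: the density operators supported in `S`, i.e. with `P_S Y = Y`. -/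
def DOps (e : HilbertBasis ℕ ℂ H) (S : Submodule ℂ H) [S.HasOrthogonalProjection] :
    Set (H →L[ℂ] H) :=
  {Y | IsDensity e Y ∧ projOp S ∘L Y = Y}

/-- The moment set `m_S = Diag(D_S)`. -/
def momentSet (e : HilbertBasis ℕ ℂ H) (S : Submodule ℂ H) [S.HasOrthogonalProjection] :
    Set (ℕ → ℝ) := diagSeq e '' DOps e S

/-- `|v|² = (|⟨v,e_i⟩|²)_i`. -/
def absSq (e : HilbertBasis ℕ ℂ H) (v : H) : ℕ → ℝ := fun i => ‖⟪e i, v⟫_ℂ‖ ^ 2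

/-- `E_j = e_j ⊗ e_j`, the rank-one orthogonal projection onto `span{e_j}`. -/
def Eproj (e : HilbertBasis ℕ ℂ H) (j : ℕ) : H →L[ℂ] H :=
  (innerSL ℂ (e j)).smulRight (e j)

/-- The joint numerical range of a sequence of operators. -/
def jnr (e : HilbertBasis ℕ ℂ H) (A : ℕ → (H →L[ℂ] H)) : Set (ℕ → ℝ) :=
  {w | ∃ ρ : H →L[ℂ] H, IsDensity e ρ ∧ ∀ j, w j = diagTr e (ρ ∘L A j)}

/-- The family `A_{S,E} = (P_S E_j P_S)_j`. -/
def ASE (e : HilbertBasis ℕ ℂ H) (S : Submodule ℂ H) [S.HasOrthogonalProjection] :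
    ℕ → (H →L[ℂ] H) := fun j => projOp S ∘L Eproj e j ∘L projOp S

/-- The principal standard vector `v^j = P_S e_j / ‖P_S e_j‖`. -/
def pvec (e : HilbertBasis ℕ ℂ H) (S : Submodule ℂ H) [S.HasOrthogonalProjection]
    (j : ℕ) : H :=
  ‖projOp S (e j)‖⁻¹ • projOp S (e j)

section Aux

variable {H : Type*} [NormedAddCommGroup H] [InnerProductSpace ℂ H] [CompleteSpace H]
variable (e : HilbertBasis ℕ ℂ H) (S : Submodule ℂ H) [S.HasOrthogonalProjection]

lemma projOp_eq_self {w : H} (hw : w ∈ S) : projOp S w = w := by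
  exact S.starProjection_eq_self_iff.2 hw

lemma projOp_mem (x : H) : projOp S x ∈ S := by
  simp [projOp]

lemma projOp_inner (x : H) {w : H} (hw : w ∈ S) : ⟪projOp S x, w⟫_ℂ = ⟪x, w⟫_ℂ := by
  have := Submodule.inner_starProjection_left_eq_right S x w
  rw [S.starProjection_eq_self_iff.2 hw] at this
  exact this

lemma pvec_mem (j : ℕ) : pvec e S j ∈ S := by
  exact Submodule.smul_mem _ _ (projOp_mem S (e j))

lemma pvec_norm (hgen : ∀ j, projOp S (e j) ≠ 0) (j : ℕ) : ‖pvec e S j‖ = 1 :=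
  norm_smul_inv_norm (hgen j)

lemma pvec_ne_zero (hgen : ∀ j, projOp S (e j) ≠ 0) (j : ℕ) : pvec e S j ≠ 0 := by
  intro h
  have := pvec_norm e S hgen j
  rw [h] at this; simp at this

lemma inner_e_pvec (j : ℕ) : ⟪e j, pvec e S j⟫_ℂ = (‖projOp S (e j)‖ : ℂ) := by
  have h1 : ⟪e j, projOp S (e j)⟫_ℂ = (‖projOp S (e j)‖ : ℂ) ^ 2 := by
    rw [← projOp_inner S (e j) (projOp_mem S (e j))]
    exact inner_self_eq_norm_sq_to_K _
  rcases eq_or_ne (‖projOp S (e j)‖) 0 with h | h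
  · simp [pvec, h]
  · rw [pvec, RCLike.real_smul_eq_coe_smul (K := ℂ), inner_smul_right, h1]
    have ht : (‖projOp S (e j)‖ : ℂ) ≠ 0 := by exact_mod_cast h
    push_cast
    field_simp
    exact mul_inv_cancel₀ ht

/-- key identity: for `w ∈ S`, `⟪e j, w⟫ = ‖P e j‖ * ⟪v^j, w⟫`. -/
lemma inner_e_eq (j : ℕ) {w : H} (hw : w ∈ S) :
    ⟪e j, w⟫_ℂ = (‖projOp S (e j)‖ : ℂ) * ⟪pvec e S j, w⟫_ℂ := by
  rcases eq_or_ne (projOp S (e j)) 0 with h | h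
  · rw [← projOp_inner S (e j) hw, h]; simp
  · have h2 : (‖projOp S (e j)‖ : ℝ) • pvec e S j = projOp S (e j) :=
      smul_inv_smul₀ (norm_ne_zero_iff.2 h) _
    conv_lhs => rw [← projOp_inner S (e j) hw, ← h2, RCLike.real_smul_eq_coe_smul (K := ℂ),
      inner_smul_left]
    rw [RCLike.conj_ofReal]
    norm_cast

end Aux

/-- basic properties of the principal standard vectors of a generic
subspace.  Coordinates are `x_i = ⟨x, e_i⟩` (here written `⟪e i, x⟫_ℂ`, linear in `x`). -/
theorem stmt_10 (e : HilbertBasis ℕ ℂ H) (S : Submodule ℂ H) [S.HasOrthogonalProjection]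
    (hgen : ∀ j, projOp S (e j) ≠ 0) :
    (∀ j, ⟪e j, pvec e S j⟫_ℂ = (‖projOp S (e j)‖ : ℂ) ∧ 0 < ‖projOp S (e j)‖) ∧
    (∀ w : H, w ∈ S → ‖w‖ = 1 → ∀ j,
      -- (i) `w_j = ‖P_S e_j‖ ⟨w, v^j⟩` and `|w_j| ≤ v^j_j`
      (⟪e j, w⟫_ℂ = (‖projOp S (e j)‖ : ℂ) * ⟪pvec e S j, w⟫_ℂ ∧
        ‖⟪e j, w⟫_ℂ‖ ≤ ‖projOp S (e j)‖) ∧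
      -- (ii) `|w_j| = v^j_j ↔ w = e^{i·arg(w_j)} v^j`
      (‖⟪e j, w⟫_ℂ‖ = ‖projOp S (e j)‖ ↔
        w = Complex.exp (((⟪e j, w⟫_ℂ).arg : ℂ) * Complex.I) • pvec e S j)) ∧
    -- (iii) `{v^j, v^k}` linearly dependent ↔ `v^j_j = |v^k_j|` ↔ `v^k_k = |v^j_k|`
    (∀ j k : ℕ,
      (¬ LinearIndependent ℂ ![pvec e S j, pvec e S k] ↔
        ‖projOp S (e j)‖ = ‖⟪e j, pvec e S k⟫_ℂ‖) ∧
      (‖projOp S (e j)‖ = ‖⟪e j, pvec e S k⟫_ℂ‖ ↔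
        ‖projOp S (e k)‖ = ‖⟪e k, pvec e S j⟫_ℂ‖)) := by
  have hpos : ∀ j, 0 < ‖projOp S (e j)‖ := fun j => norm_pos_iff.2 (hgen j)
  have hnorm : ∀ w : H, w ∈ S → ∀ j,
      ‖⟪e j, w⟫_ℂ‖ = ‖projOp S (e j)‖ * ‖⟪pvec e S j, w⟫_ℂ‖ := by
    intro w hw j
    rw [inner_e_eq e S j hw, norm_mul, Complex.norm_real, Real.norm_eq_abs, abs_of_nonneg (norm_nonneg _)]
  have key2 : ∀ w : H, w ∈ S → ‖w‖ = 1 → ∀ j,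
      ‖⟪e j, w⟫_ℂ‖ = ‖projOp S (e j)‖ ↔
        w = Complex.exp (((⟪e j, w⟫_ℂ).arg : ℂ) * Complex.I) • pvec e S j := by
    intro w hw hnw j
    constructor
    · intro h
      have hw0 : w ≠ 0 := by intro h0; rw [h0] at hnw; simp at hnw
      have h1 : ‖⟪pvec e S j, w⟫_ℂ‖ = 1 := by
        have h2 := (hnorm w hw j).symm.trans h
        exact mul_left_cancel₀ (ne_of_gt (hpos j)) (h2.trans (mul_one _).symm)
      have h2 : ‖⟪pvec e S j, w⟫_ℂ‖ = ‖pvec e S j‖ * ‖w‖ := by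
        rw [pvec_norm e S hgen j, hnw, one_mul, h1]
      obtain ⟨r, hr0, hrw⟩ := (norm_inner_eq_norm_iff (pvec_ne_zero e S hgen j) hw0).1 h2
      have hinner : ⟪e j, w⟫_ℂ = r * (‖projOp S (e j)‖ : ℂ) := by
        rw [hrw, inner_smul_right, inner_e_pvec]
      have ht : (‖projOp S (e j)‖ : ℂ) ≠ 0 := by
        exact_mod_cast (ne_of_gt (hpos j))
      have harg : Complex.exp (((⟪e j, w⟫_ℂ).arg : ℂ) * Complex.I) = r := by
        have habs : ((‖⟪e j, w⟫_ℂ‖ : ℝ) : ℂ) = (‖projOp S (e j)‖ : ℂ) := by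
          rw [h]
        have h3 := Complex.norm_mul_exp_arg_mul_I (⟪e j, w⟫_ℂ)
        rw [habs] at h3
        have h4 := h3.trans hinner
        exact mul_left_cancel₀ ht (h4.trans (mul_comm _ _))
      rw [harg]
      exact hrw
    · intro h
      rw [h, inner_smul_right, norm_mul, inner_e_pvec e S j]
      simp [Complex.norm_exp_ofReal_mul_I, Complex.norm_real,
        abs_of_nonneg (norm_nonneg _)]
  have hle : ∀ w : H, w ∈ S → ‖w‖ = 1 → ∀ j, ‖⟪e j, w⟫_ℂ‖ ≤ ‖projOp S (e j)‖ := by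
    intro w hw hnw j
    rw [hnorm w hw j]
    calc ‖projOp S (e j)‖ * ‖⟪pvec e S j, w⟫_ℂ‖
        ≤ ‖projOp S (e j)‖ * (‖pvec e S j‖ * ‖w‖) := by
          gcongr
          exact norm_inner_le_norm _ _
      _ = ‖projOp S (e j)‖ := by rw [pvec_norm e S hgen j, hnw]; ring
  have hdep : ∀ j k, (¬ LinearIndependent ℂ ![pvec e S j, pvec e S k]) ↔
      ∃ a : ℂ, pvec e S j = a • pvec e S k := by
    intro j k
    rw [linearIndependent_fin2]
    simp only [Matrix.cons_val_one, Matrix.head_cons, Matrix.cons_val_zero]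
    constructor
    · intro h
      rcases not_and_or.1 h with h | h
      · exact absurd (not_not.1 h) (pvec_ne_zero e S hgen k)
      · push_neg at h
        obtain ⟨a, ha⟩ := h
        exact ⟨a, ha.symm⟩
    · rintro ⟨a, ha⟩ h
      exact h.2 a ha.symm
  have hswap : ∀ j k, (∃ a : ℂ, pvec e S j = a • pvec e S k) ↔
      ∃ a : ℂ, pvec e S k = a • pvec e S j := by
    have main : ∀ j k, (∃ a : ℂ, pvec e S j = a • pvec e S k) →
        ∃ a : ℂ, pvec e S k = a • pvec e S j := by
      rintro j k ⟨a, ha⟩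
      have ha0 : a ≠ 0 := by
        rintro rfl
        rw [zero_smul] at ha
        exact pvec_ne_zero e S hgen _ ha
      exact ⟨a⁻¹, by rw [ha, smul_smul, inv_mul_cancel₀ ha0, one_smul]⟩
    exact fun j k => ⟨main j k, main k j⟩
  have hchar : ∀ j k, (∃ a : ℂ, pvec e S k = a • pvec e S j) ↔
      ‖projOp S (e j)‖ = ‖⟪e j, pvec e S k⟫_ℂ‖ := by
    intro j k
    constructor
    · rintro ⟨a, ha⟩
      have ha1 : ‖a‖ = 1 := by
        have h1 : ‖pvec e S k‖ = ‖a‖ * ‖pvec e S j‖ := by rw [ha, norm_smul]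
        rw [pvec_norm e S hgen k, pvec_norm e S hgen j, mul_one] at h1
        exact h1.symm
      rw [ha, inner_smul_right, norm_mul, ha1, inner_e_pvec e S j, Complex.norm_real, Real.norm_eq_abs,
        abs_of_nonneg (norm_nonneg _), one_mul]
    · intro h
      exact ⟨_, (key2 (pvec e S k) (pvec_mem e S k) (pvec_norm e S hgen k) j).1 h.symm⟩
  refine ⟨fun j => ⟨inner_e_pvec e S j, hpos j⟩, fun w hw hnw j =>
    ⟨⟨inner_e_eq e S j hw, hle w hw hnw j⟩, key2 w hw hnw j⟩, fun j k =>
    ⟨(hdep j k).trans ((hswap j k).trans (hchar j k)),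
     (hchar j k).symm.trans ((hswap j k).symm.trans (hchar k j))⟩⟩
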